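/- Let n ≥ 3 be an integer and s ∈ (0, n/2). Then the constant ĉ_{n,s} = 2^{(2s-n)/2} · (Γ((n/4)+(s/2))/Γ((n/4)-(s/2)))^{(2s-n)/(2s)} · (Γ(n/2 - s)/Γ(n/2 + s))^{(2s-n)/(4s)} satisfies ĉ_{n,s} > 1. -/
import Mathlib
open Real MeasureTheory Set

lemma betaHalf_integrand_eq (w : ℝ) {x : ℝ} (hx : 0 ≤ x) (hx1 : x ≤ 1) :
    ((x ^ (w - 1) * (1 - x) ^ (-(1/2) : ℝ) : ℝ) : ℂ)
      = (x:ℂ) ^ ((w:ℂ) - 1) * ((1:ℂ) - (x:ℂ)) ^ ((1/2 : ℂ) - 1) := by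
  rw [Complex.ofReal_mul, Complex.ofReal_cpow hx, Complex.ofReal_cpow (by linarith)]
  push_cast
  norm_num

lemma betaHalf_integrable {w : ℝ} (hw : 0 < w) :
    IntervalIntegrable (fun x : ℝ => x ^ (w - 1) * (1 - x) ^ (-(1/2) : ℝ)) volume 0 1 := by
  have h := Complex.betaIntegral_convergent (u := (w:ℂ)) (v := 1/2) (by simpa) (by norm_num)
  rw [intervalIntegrable_iff_integrableOn_Ioc_of_le zero_le_one] at h ⊢
  have h2 : IntegrableOn (fun x : ℝ => ((x:ℂ) ^ ((w:ℂ) - 1) * ((1:ℂ) - (x:ℂ)) ^ ((1/2:ℂ) - 1)).re)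
      (Ioc (0:ℝ) 1) volume := h.re
  refine MeasureTheory.IntegrableOn.congr_fun h2 (fun x hx => ?_) measurableSet_Ioc
  rw [← betaHalf_integrand_eq w hx.1.le hx.2]
  exact Complex.ofReal_re _

noncomputable def betaHalf (w : ℝ) : ℝ :=
  ∫ x in (0:ℝ)..1, x ^ (w - 1) * (1 - x) ^ (-(1/2) : ℝ)

lemma Gamma_betaHalf {w : ℝ} (hw : 0 < w) :
    Real.Gamma w * Real.Gamma (1/2) = Real.Gamma (w + 1/2) * betaHalf w := by
  have h := Complex.Gamma_mul_Gamma_eq_betaIntegral (s := (w:ℂ)) (t := 1/2) (by simpa) (by norm_num)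
  have hbeta : Complex.betaIntegral (w:ℂ) (1/2) = ((betaHalf w : ℝ) : ℂ) := by
    rw [betaHalf, Complex.betaIntegral]
    have h1 : (∫ x in (0:ℝ)..1, (x:ℂ) ^ ((w:ℂ) - 1) * ((1:ℂ) - (x:ℂ)) ^ ((1/2:ℂ) - 1))
        = ∫ x in (0:ℝ)..1, ((x ^ (w - 1) * (1 - x) ^ (-(1/2) : ℝ) : ℝ) : ℂ) := by
      refine intervalIntegral.integral_congr fun x hx => ?_
      rw [uIcc_of_le zero_le_one] at hx
      exact (betaHalf_integrand_eq w hx.1 hx.2).symm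
    rw [h1]
    exact RCLike.intervalIntegral_ofReal
  rw [hbeta, show ((w:ℂ) + 1/2) = ((w + 1/2 : ℝ) : ℂ) by push_cast; ring,
    show ((1:ℂ)/2) = ((1/2 : ℝ) : ℂ) by norm_num, Complex.Gamma_ofReal, Complex.Gamma_ofReal,
    Complex.Gamma_ofReal] at h
  exact_mod_cast h

lemma betaHalf_strict_anti {u v : ℝ} (hu : 0 < u) (huv : u < v) : betaHalf v < betaHalf u := by
  have hsub : (0:ℝ) < ∫ x in (0:ℝ)..1,
      (x ^ (u - 1) * (1 - x) ^ (-(1/2) : ℝ) - x ^ (v - 1) * (1 - x) ^ (-(1/2) : ℝ)) := by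
    refine intervalIntegral.intervalIntegral_pos_of_pos_on
      ((betaHalf_integrable hu).sub (betaHalf_integrable (hu.trans huv))) (fun x hx => ?_)
      one_pos
    have h1 : x ^ (v - 1) < x ^ (u - 1) :=
      Real.rpow_lt_rpow_of_exponent_gt hx.1 hx.2 (by linarith)
    have h2 : (0:ℝ) < (1 - x) ^ (-(1/2) : ℝ) := Real.rpow_pos_of_pos (by linarith [hx.2]) _
    nlinarith
  rw [intervalIntegral.integral_sub (betaHalf_integrable hu)
    (betaHalf_integrable (hu.trans huv))] at hsub
  have h : betaHalf u - betaHalf v > 0 := by unfold betaHalf; linarith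
  linarith

lemma gamma_ratio_lt {u v : ℝ} (hu : 0 < u) (huv : u < v) :
    Real.Gamma v * Real.Gamma (u + 1/2) < Real.Gamma u * Real.Gamma (v + 1/2) := by
  have hv : 0 < v := hu.trans huv
  have hGu : 0 < Real.Gamma u := Real.Gamma_pos_of_pos hu
  have hGv : 0 < Real.Gamma v := Real.Gamma_pos_of_pos hv
  have hGu2 : 0 < Real.Gamma (u + 1/2) := Real.Gamma_pos_of_pos (by linarith)
  have hGv2 : 0 < Real.Gamma (v + 1/2) := Real.Gamma_pos_of_pos (by linarith)
  have hGh : 0 < Real.Gamma (1/2) := Real.Gamma_pos_of_pos (by norm_num)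
  have h1 := Gamma_betaHalf hu
  have h2 := Gamma_betaHalf hv
  have hb := betaHalf_strict_anti hu huv
  have e1 : betaHalf u = Real.Gamma u * Real.Gamma (1/2) / Real.Gamma (u + 1/2) := by
    rw [eq_div_iff hGu2.ne']; linear_combination -h1
  have e2 : betaHalf v = Real.Gamma v * Real.Gamma (1/2) / Real.Gamma (v + 1/2) := by
    rw [eq_div_iff hGv2.ne']; linear_combination -h2
  rw [e1, e2, div_lt_div_iff₀ hGv2 hGu2] at hb
  have h3 : Real.Gamma v * Real.Gamma (u + 1/2) * Real.Gamma (1/2)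
      < Real.Gamma u * Real.Gamma (v + 1/2) * Real.Gamma (1/2) := by
    linear_combination hb
  exact lt_of_mul_lt_mul_right h3 hGh.le

lemma aux_P_lt_one {gA gB gA2 gB2 g2A g2B p tA tA' tB tB' ts : ℝ}
    (hgA : 0 < gA) (hgB : 0 < gB) (hgA2 : 0 < gA2) (hgB2 : 0 < gB2)
    (hg2A : 0 < g2A) (hp : 0 < p) (htA' : 0 < tA') (htB' : 0 < tB')
    (dA : gA * gA2 = g2A * tA * p) (dB : gB * gB2 = g2B * tB * p)
    (hA1 : tA * tA' = 1) (hB1 : tB * tB' = 1) (hts : ts * tB' = tA')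
    (key : gA * gB2 < gB * gA2) :
    ts * (gA / gB) ^ (2:ℕ) * (g2B / g2A) < 1 := by
  have h2A : g2A * p = gA * gA2 * tA' := by linear_combination (-tA') * dA - g2A * p * hA1
  have h2B : g2B * p = gB * gB2 * tB' := by linear_combination (-tB') * dB - g2B * p * hB1
  have e2A : g2B / g2A = (gB * gB2 * tB') / (gA * gA2 * tA') := by
    rw [div_eq_div_iff hg2A.ne' (by positivity)]
    linear_combination g2A * h2B - g2B * h2A
  have hstep : ts * (gA / gB) ^ (2:ℕ) * ((gB * gB2 * tB') / (gA * gA2 * tA'))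
      = (gA * gB2) / (gB * gA2) * (ts * tB' / tA') := by
    field_simp
  rw [e2A, hstep, hts, div_self htA'.ne', mul_one, div_lt_one (by positivity)]
  exact key

theorem hat_c_gt_one (n : ℕ) (hn : 3 ≤ n) (s : ℝ) (hs : 0 < s) (hs2 : s < (n:ℝ) / 2) :
    1 < (2:ℝ) ^ ((2 * s - (n:ℝ)) / 2) *
        (Real.Gamma ((n:ℝ) / 4 + s / 2) / Real.Gamma ((n:ℝ) / 4 - s / 2)) ^
          ((2 * s - (n:ℝ)) / (2 * s)) *
        (Real.Gamma ((n:ℝ) / 2 - s) / Real.Gamma ((n:ℝ) / 2 + s)) ^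
          ((2 * s - (n:ℝ)) / (4 * s)) := by
  have hn3 : (3:ℝ) ≤ (n:ℝ) := by exact_mod_cast hn
  set A : ℝ := (n:ℝ) / 4 + s / 2 with hA
  set B : ℝ := (n:ℝ) / 4 - s / 2 with hB
  have hBpos : 0 < B := by rw [hB]; linarith
  have hApos : 0 < A := by rw [hA]; linarith
  have hBA : B < A := by rw [hA, hB]; linarith
  have hGA : 0 < Real.Gamma A := Real.Gamma_pos_of_pos hApos
  have hGB : 0 < Real.Gamma B := Real.Gamma_pos_of_pos hBpos
  have hGA2 : 0 < Real.Gamma (A + 1/2) := Real.Gamma_pos_of_pos (by linarith)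
  have hGB2 : 0 < Real.Gamma (B + 1/2) := Real.Gamma_pos_of_pos (by linarith)
  have hG2A : 0 < Real.Gamma (2 * A) := Real.Gamma_pos_of_pos (by linarith)
  have hG2B : 0 < Real.Gamma (2 * B) := Real.Gamma_pos_of_pos (by linarith)
  have hpi : (0:ℝ) < √π := Real.sqrt_pos.mpr Real.pi_pos
  have key := gamma_ratio_lt hBpos hBA
  have hPlt : (2:ℝ) ^ (2 * s) * (Real.Gamma A / Real.Gamma B) ^ (2:ℕ) *
      (Real.Gamma (2 * B) / Real.Gamma (2 * A)) < 1 := by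
    refine aux_P_lt_one hGA hGB hGA2 hGB2 hG2A hpi
      (Real.rpow_pos_of_pos two_pos (2 * A - 1)) (Real.rpow_pos_of_pos two_pos (2 * B - 1))
      (Real.Gamma_mul_Gamma_add_half A) (Real.Gamma_mul_Gamma_add_half B)
      ?_ ?_ ?_ key
    · rw [← Real.rpow_add two_pos]; norm_num
    · rw [← Real.rpow_add two_pos]; norm_num
    · rw [← Real.rpow_add two_pos]
      congr 1
      rw [hA, hB]; ring
  have hPpos : 0 < (2:ℝ) ^ (2 * s) * (Real.Gamma A / Real.Gamma B) ^ (2:ℕ) *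
      (Real.Gamma (2 * B) / Real.Gamma (2 * A)) := by positivity
  set e : ℝ := (2 * s - (n:ℝ)) / (4 * s) with he
  have helt : e < 0 := div_neg_of_neg_of_pos (by linarith) (by linarith)
  have h2B : (n:ℝ) / 2 - s = 2 * B := by rw [hB]; ring
  have h2A : (n:ℝ) / 2 + s = 2 * A := by rw [hA]; ring
  have e1 : (2 * s - (n:ℝ)) / 2 = (2 * s) * e := by
    rw [he]; field_simp; ring
  have e2 : (2 * s - (n:ℝ)) / (2 * s) = ((2:ℕ):ℝ) * e := by
    rw [he]; field_simp; ring
  rw [h2B, h2A, e1, e2]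
  calc (1:ℝ) < ((2:ℝ) ^ (2 * s) * (Real.Gamma A / Real.Gamma B) ^ (2:ℕ) *
        (Real.Gamma (2 * B) / Real.Gamma (2 * A))) ^ e :=
      (Real.one_lt_rpow_iff_of_pos hPpos).mpr (Or.inr ⟨hPlt, helt⟩)
    _ = (2:ℝ) ^ (2 * s * e) * (Real.Gamma A / Real.Gamma B) ^ (((2:ℕ):ℝ) * e) *
        (Real.Gamma (2 * B) / Real.Gamma (2 * A)) ^ e := by
      rw [Real.mul_rpow (by positivity) (by positivity),
        Real.mul_rpow (by positivity) (by positivity),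
        ← Real.rpow_natCast (Real.Gamma A / Real.Gamma B) 2,
        ← Real.rpow_mul (by norm_num : (0:ℝ) ≤ 2),
        ← Real.rpow_mul (div_nonneg hGA.le hGB.le)]
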